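/- Let p be a prime, and let k_1, k_2 be uniformly distributed and independent on Z_p. For any messages a ≠ b in Z_p^{≤l} (nonempty tuples of length at most l) and any tags t_0, t_1 ∈ Z_p, Pr[g(b,k_1,k_2) = t_1 | g(a,k_1,k_2) = t_0] ≤ (l+1)/p, where g(m,k_1,k_2) = k_1^{ν+1} + m_1 k_1^ν + ... + m_ν k_1 + k_2 for m of length ν. -/

import Mathlib

/-!
Write `g(m, k₁, k₂) = f_m(k₁) + k₂` with `f_m = X^{ν+1} + m₁ X^ν + ⋯ + m_ν X`. For each `k₁` the
condition `g(a, k₁, k₂) = t₀` fixes `k₂`, so exactly `p` key pairs satisfy it. Among them, those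
with `g(b, k₁, k₂) = t₁` have `k₁` a root of `f_b - f_a - (t₁ - t₀)`, which is nonzero (the `f_m`
have no constant term and determine `m`) of degree at most `l + 1`, hence has at most `l + 1` roots.
-/

def macG {p : ℕ} (m : List (ZMod p)) (k₁ k₂ : ZMod p) : ZMod p :=
  k₁ ^ (m.length + 1) + (∑ i : Fin m.length, m.get i * k₁ ^ (m.length - i.val)) + k₂

open Finset Polynomial

section KeyCounting

variable {α K : Type*} [Fintype α] [AddGroup K] [Fintype K] [DecidableEq K]

theorem card_filter_add_snd_eq (f : α → K) (t : K) :
    #{k : α × K | f k.1 + k.2 = t} = Fintype.card α := by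
  refine card_nbij' Prod.fst (fun x => (x, -f x + t)) (by simp) (by simp) ?_ fun _ _ => rfl
  rintro ⟨x, y⟩ hk
  simp only [coe_filter, mem_univ, true_and, Set.mem_ofPred_eq] at hk
  simp [← hk]

theorem card_filter_add_snd_eq_and_le (f g : α → K) (t₁ t₀ : K) :
    #{k : α × K | f k.1 + k.2 = t₁ ∧ g k.1 + k.2 = t₀} ≤ #{x | f x - g x = t₁ - t₀} := by
  refine card_le_card_of_injOn Prod.fst ?_ ?_
  · rintro ⟨x, y⟩ hk
    simp only [coe_filter, mem_univ, true_and, Set.mem_ofPred_eq] at hk ⊢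
    rw [← hk.1, ← hk.2, add_sub_add_right_eq_sub]
  · rintro ⟨x, y⟩ hk ⟨x', y'⟩ hk' (rfl : x = x')
    simp only [coe_filter, mem_univ, true_and, Set.mem_ofPred_eq] at hk hk'
    rw [add_left_cancel (hk.2.trans hk'.2.symm)]

end KeyCounting

theorem Polynomial.card_filter_eval_eq_le {R : Type*} [CommRing R] [IsDomain R] [Fintype R]
    [DecidableEq R] {P : R[X]} {c : R} (hP : P ≠ C c) :
    #{x | P.eval x = c} ≤ P.natDegree := by
  rw [← natDegree_sub_C (a := c)]
  refine card_le_degree_of_subset_roots fun x hx => ?_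
  rw [mem_roots (sub_ne_zero.mpr hP), IsRoot, eval_sub, eval_C, sub_eq_zero]
  simpa using hx

noncomputable def macPoly {R : Type*} [Semiring R] (m : List R) : R[X] :=
  X ^ (m.length + 1) + ∑ i : Fin m.length, C (m.get i) * X ^ (m.length - i.val)

theorem macG_eq_eval_add {p : ℕ} (m : List (ZMod p)) (k₁ k₂ : ZMod p) :
    macG m k₁ k₂ = (macPoly m).eval k₁ + k₂ := by
  simp [macG, macPoly, eval_finsetSum]

section MacPoly

variable {R : Type*} [Semiring R]

theorem coeff_macPoly_zero (m : List R) : (macPoly m).coeff 0 = 0 := by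
  rw [macPoly, coeff_add, coeff_X_pow, if_neg (by omega), zero_add, finsetSum_coeff]
  exact sum_eq_zero fun i _ => by rw [coeff_C_mul_X_pow, if_neg (by omega)]

theorem coeff_macPoly_length_sub (m : List R) (i : Fin m.length) :
    (macPoly m).coeff (m.length - i) = m.get i := by
  rw [macPoly, coeff_add, coeff_X_pow, if_neg (by omega), zero_add, finsetSum_coeff,
    sum_eq_single i]
  · simp
  · intro j _ hji
    rw [coeff_C_mul_X_pow, if_neg (by omega)]
  · simp

theorem natDegree_macPoly [Nontrivial R] (m : List R) :
    (macPoly m).natDegree = m.length + 1 := by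
  rw [macPoly, natDegree_add_eq_left_of_natDegree_lt] <;> rw [natDegree_X_pow]
  refine (natDegree_sum_le_of_forall_le _ _ fun i _ => ?_).trans_lt (Nat.lt_succ_self _)
  exact (natDegree_C_mul_X_pow_le _ _).trans (Nat.sub_le _ _)

theorem macPoly_injective [Nontrivial R] : Function.Injective (macPoly (R := R)) := by
  intro a b h
  have hlen : a.length = b.length := by
    simpa [natDegree_macPoly] using congrArg natDegree h
  refine List.ext_get hlen fun n ha hb => ?_
  calc a.get ⟨n, ha⟩ = (macPoly a).coeff (a.length - n) :=
        (coeff_macPoly_length_sub a ⟨n, ha⟩).symm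
    _ = (macPoly b).coeff (b.length - n) := by rw [h, hlen]
    _ = b.get ⟨n, hb⟩ := coeff_macPoly_length_sub b ⟨n, hb⟩

end MacPoly

theorem macPoly_sub_macPoly_ne_C {R : Type*} [Ring R] [Nontrivial R] {a b : List R} (hab : a ≠ b)
    (c : R) : macPoly b - macPoly a ≠ C c := by
  intro h
  have hc : c = 0 := by
    simpa [coeff_macPoly_zero] using (congrArg (coeff · 0) h).symm
  rw [hc, C_0, sub_eq_zero] at h
  exact hab (macPoly_injective h).symm

theorem stmt_12_general (p : ℕ) [Fact p.Prime] (l : ℕ)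
    (a b : List (ZMod p))
    (hal : a.length ≤ l) (hbl : b.length ≤ l) (hab : a ≠ b)
    (t₀ t₁ : ZMod p) :
    (((Finset.univ.filter fun k : ZMod p × ZMod p =>
          macG b k.1 k.2 = t₁ ∧ macG a k.1 k.2 = t₀)).card : ℝ)
        / ((Finset.univ.filter fun k : ZMod p × ZMod p =>
          macG a k.1 k.2 = t₀)).card
      ≤ (l + 1) / p := by
  simp only [macG_eq_eval_add]
  have hden := card_filter_add_snd_eq (fun x => (macPoly a).eval x) t₀
  have hnum := card_filter_add_snd_eq_and_le (fun x => (macPoly b).eval x)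
    (fun x => (macPoly a).eval x) t₁ t₀
  simp only [← eval_sub] at hnum
  have hroots := card_filter_eval_eq_le (macPoly_sub_macPoly_ne_C hab (t₁ - t₀))
  have hdeg : (macPoly b - macPoly a).natDegree ≤ l + 1 :=
    (natDegree_sub_le _ _).trans (by simp only [natDegree_macPoly]; omega)
  rw [hden, ZMod.card]
  gcongr
  exact_mod_cast hnum.trans (hroots.trans hdeg)

/-- For uniform independent keys `k₁, k₂` on `Z_p`, distinct
nonempty messages `a ≠ b` of length at most `l` and any tags `t₀, t₁`, the
conditional probability `Pr[g(b,k₁,k₂) = t₁ | g(a,k₁,k₂) = t₀] ≤ (l+1)/p`.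
With uniform keys this conditional probability is the ratio of the number of
key pairs satisfying both equations to the number satisfying the condition. -/
theorem stmt_12 (p : ℕ) (hp : p.Prime) [Fact p.Prime] (l : ℕ)
    (a b : List (ZMod p)) (ha : a ≠ []) (hb : b ≠ [])
    (hal : a.length ≤ l) (hbl : b.length ≤ l) (hab : a ≠ b)
    (t₀ t₁ : ZMod p) :
    (((Finset.univ.filter fun k : ZMod p × ZMod p =>
          macG b k.1 k.2 = t₁ ∧ macG a k.1 k.2 = t₀)).card : ℝ)
        / ((Finset.univ.filter fun k : ZMod p × ZMod p =>
          macG a k.1 k.2 = t₀)).card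
      ≤ (l + 1) / p :=
  stmt_12_general p l a b hal hbl hab t₀ t₁
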